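/- If d = cos ψ with sin ψ = κ sin φ and d' = −2κ sin(ψ/2) cos φ, then (d')² = 2(1 − d)(d² − λ²), where λ² = 1 − κ². -/
import Mathlib

theorem d_ode (κ lam : ℝ) (hκ : 0 < κ) (hκ1 : κ < 1) (hlam : lam = Real.sqrt (1 - κ ^ 2))
    (φ ψ : ℝ → ℝ)
    (hconstraint : ∀ u, Real.sin (ψ u) = κ * Real.sin (φ u))
    (d d' : ℝ → ℝ) (hd : ∀ u, d u = Real.cos (ψ u))
    (hderiv : ∀ u, HasDerivAt d (d' u) u)
    (hd' : ∀ u, d' u = -2 * κ * Real.sin (ψ u / 2) * Real.cos (φ u)) :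
    ∀ u, (d' u) ^ 2 = 2 * (1 - d u) * ((d u) ^ 2 - lam ^ 2) := by
  intro u
  have hlam2 : lam ^ 2 = 1 - κ ^ 2 := by
    rw [hlam, sq, Real.mul_self_sqrt (by nlinarith)]
  have h1 : Real.sin (ψ u / 2) ^ 2 = (1 - Real.cos (ψ u)) / 2 := by
    have h := Real.cos_sq (ψ u / 2)
    have hpy := Real.sin_sq_add_cos_sq (ψ u / 2)
    rw [mul_div_cancel₀ _ (two_ne_zero)] at h
    linarith
  have h2 : Real.cos (φ u) ^ 2 = 1 - Real.sin (φ u) ^ 2 := Real.cos_sq' _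
  have h3 : Real.sin (ψ u) ^ 2 = 1 - Real.cos (ψ u) ^ 2 := Real.sin_sq _
  have hc := hconstraint u
  have hc2 : Real.sin (ψ u) ^ 2 = κ ^ 2 * Real.sin (φ u) ^ 2 := by rw [hc]; ring
  rw [hd', hd, hlam2]
  linear_combination (4*κ^2*(Real.cos (φ u))^2) * h1 + (2*(1-Real.cos (ψ u))*κ^2) * h2 +
    (2*(1-Real.cos (ψ u))) * hc2 - (2*(1-Real.cos (ψ u))) * h3
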